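/- arXiv:math/0501383 — 5 statements merged into one kernel-verified Lean document; each statement's English description precedes it below -/
import Mathlib

section
/- In any bicategory, if a 1-cell s : A → B admits a right lifting (t, ε) of the identity 1_B through s, and this lifting is respected by s (meaning ε ◁ s exhibits t ∘ s as the right lifting of s through s), then s is left adjoint to t with counit ε. -/
/-!
The unit is forced on us: since `s` respects the lifting, `ε ▷ s` exhibits `t ≫ s` as the right
lifting of `s` through `s`, so the 2-cell `𝟙 a ≫ s ≅ s ≫ 𝟙 b` factors uniquely through it; this
factorization is `η`, and the factorization property is precisely the left triangle identity.
The right triangle identity is then checked after whiskering with `s` and composing with `ε`,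
which is faithful because `(t, ε)` is itself a right lifting; there, the left triangle
identity turns one composite into the other.
-/

open CategoryTheory Bicategory

universe w v u

variable {B : Type u} [Bicategory.{w, v} B]

/-- Whiskering a right lift of `g` through `f` with a 1-cell `h : x ⟶ c`. -/
def rightLiftWhisker {a b c : B} {f : b ⟶ a} {g : c ⟶ a} (t : RightLift f g) {x : B}
    (h : x ⟶ c) : RightLift f (h ≫ g) :=
  RightLift.mk (h ≫ t.lift) ((α_ h t.lift f).hom ≫ h ◁ t.counit)

namespace CategoryTheory.Bicategory.RightLift.IsKan

variable {a b : B} {s : a ⟶ b} {t : RightLift s (𝟙 b)}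

theorem rightZigzag_eq_of_leftZigzag_eq (H : IsKan t) {η : 𝟙 a ⟶ s ≫ t.lift}
    (hη : leftZigzag η t.counit = (λ_ s).hom ≫ (ρ_ s).inv) :
    rightZigzag η t.counit = (ρ_ t.lift).hom ≫ (λ_ t.lift).inv := by
  apply (cancel_mono (λ_ t.lift).hom).mp
  apply H.hom_ext
  calc (rightZigzag η t.counit ≫ (λ_ t.lift).hom) ▷ s ≫ t.counit
    _ = 𝟙 _ ⊗≫ t.lift ◁ η ▷ s ⊗≫ (t.counit ▷ (t.lift ≫ s) ≫ 𝟙 b ◁ t.counit) ⊗≫ 𝟙 _ := by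
        rw [rightZigzag]; bicategory
    _ = 𝟙 _ ⊗≫ t.lift ◁ leftZigzag η t.counit ⊗≫ t.counit ⊗≫ 𝟙 _ := by
        rw [← whisker_exchange, leftZigzag]; bicategory
    _ = (((ρ_ t.lift).hom ≫ (λ_ t.lift).inv) ≫ (λ_ t.lift).hom) ▷ s ≫ t.counit := by
        rw [hη]; bicategory

def adjunction (H : IsKan t) (H' : IsKan (t.whisker s)) : s ⊣ t.lift :=
  let η : 𝟙 a ⟶ s ≫ t.lift := H'.desc <| .mk (𝟙 a) <| (λ_ s).hom ≫ (ρ_ s).inv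
  have hfac : η ▷ s ≫ (α_ s t.lift s).hom ≫ s ◁ t.counit = (λ_ s).hom ≫ (ρ_ s).inv := H'.fac _
  have hη : leftZigzag η t.counit = (λ_ s).hom ≫ (ρ_ s).inv := by
    simpa [leftZigzag, bicategoricalComp] using hfac
  { unit := η
    counit := t.counit
    left_triangle := hη
    right_triangle := H.rightZigzag_eq_of_leftZigzag_eq hη }

@[simp]
theorem adjunction_counit (H : IsKan t) (H' : IsKan (t.whisker s)) :
    (H.adjunction H').counit = t.counit :=
  rfl

end CategoryTheory.Bicategory.RightLift.IsKan

/-- if `(t, ε)` is a right lifting of the identity `𝟙 b` through `s`, and this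
lifting is respected by `s` itself, then `s` is left adjoint to `t` with counit `ε`. -/
theorem isLeftAdjoint_of_rightLift_id_respected {a b : B} (s : a ⟶ b) (t : b ⟶ a)
    (ε' : t ≫ s ⟶ 𝟙 b)
    (H : RightLift.IsKan (RightLift.mk t ε'))
    (Hs : RightLift.IsKan (rightLiftWhisker (RightLift.mk t ε') s)) :
    ∃ adj : s ⊣ t, adj.counit = ε' :=
  ⟨H.adjunction Hs, H.adjunction_counit Hs⟩
end

section
/- In any bicategory, a 1-cell s : A → B has a right adjoint if and only if for every 1-cell g : C → B the right lifting of g through s exists and is absolute (respected by precomposition with every 1-cell into C). -/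
open CategoryTheory Bicategory

universe w v u

variable {B : Type u} [Bicategory.{w, v} B]

/-- A right lift is absolute when it is respected by (whiskering with) every 1-cell. -/
def RightLiftIsAbsKan {a b c : B} {f : b ⟶ a} {g : c ⟶ a} (t : RightLift f g) : Prop :=
  ∀ (x : B) (h : x ⟶ c), Nonempty (RightLift.IsKan (rightLiftWhisker t h))

/-
Given `s ⊣ u`, the right lift of `g` through `s` is `g ≫ u` with counit `g ◁ ε`: a 2-cell
`l ≫ s ⟶ g` corresponds to its transpose `l ⟶ g ≫ u` under the adjunction, and precomposing
with `h` commutes with this construction up to associativity. Conversely, if `(u, ε)` is a right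
lift of `𝟙 b` through `s` respected by `s`, then the unit `η : 𝟙 a ⟶ s ≫ u` is the 2-cell
induced by the lift `(𝟙 a, λ ≫ ρ⁻¹)` of `s`; the left triangle law is its factorisation
property, and the right one follows from the universality of `(u, ε)`.
-/

namespace CategoryTheory.Bicategory

variable {a b c : B}

namespace Adjunction

variable {s : a ⟶ b} {u : b ⟶ a}

def rightLift (adj : s ⊣ u) (g : c ⟶ b) : RightLift s g :=
  .mk (g ≫ u) ((α_ g u s).hom ≫ g ◁ adj.counit ≫ (ρ_ g).hom)

def isKanRightLift (adj : s ⊣ u) (g : c ⟶ b) : (adj.rightLift g).IsKan :=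
  .mk (fun k ↦
    RightLift.homMk (𝟙 _ ⊗≫ k.lift ◁ adj.unit ⊗≫ k.counit ▷ u ⊗≫ 𝟙 _ : k.lift ⟶ g ≫ u) <| by
      change _ ▷ s ≫ ((α_ g u s).hom ≫ g ◁ adj.counit ≫ (ρ_ g).hom) = k.counit
      calc _
        _ = 𝟙 _ ⊗≫ k.lift ◁ adj.unit ▷ s ⊗≫ (k.counit ▷ (u ≫ s) ≫ g ◁ adj.counit) ⊗≫ 𝟙 _ := by
          bicategory
        _ = 𝟙 _ ⊗≫ k.lift ◁ leftZigzag adj.unit adj.counit ⊗≫ k.counit ⊗≫ 𝟙 _ := by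
          rw [← whisker_exchange, leftZigzag]; bicategory
        _ = k.counit := by
          rw [adj.left_triangle]; bicategory) <| by
    intro k m
    ext
    let ml : k.lift ⟶ g ≫ u := m.left
    have hm : ml ▷ s ≫ ((α_ g u s).hom ≫ g ◁ adj.counit ≫ (ρ_ g).hom) = k.counit :=
      RightLift.w m
    change ml = 𝟙 _ ⊗≫ k.lift ◁ adj.unit ⊗≫ k.counit ▷ u ⊗≫ 𝟙 _
    calc ml
      _ = 𝟙 _ ⊗≫ ml ⊗≫ g ◁ rightZigzag adj.unit adj.counit ⊗≫ 𝟙 _ := by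
        rw [adj.right_triangle]; bicategory
      _ = 𝟙 _ ⊗≫ (k.lift ◁ adj.unit ≫ ml ▷ (s ≫ u)) ⊗≫ g ◁ adj.counit ▷ u ⊗≫ 𝟙 _ := by
        rw [rightZigzag, whisker_exchange]; bicategory
      _ = 𝟙 _ ⊗≫ k.lift ◁ adj.unit ⊗≫
            (ml ▷ s ≫ (α_ g u s).hom ≫ g ◁ adj.counit ≫ (ρ_ g).hom) ▷ u ⊗≫ 𝟙 _ := by
        bicategory
      _ = _ := by rw [hm]

def rightLiftWhiskerIso (adj : s ⊣ u) (g : c ⟶ b) {x : B} (h : x ⟶ c) :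
    adj.rightLift (h ≫ g) ≅ (adj.rightLift g).whisker h :=
  CostructuredArrow.isoMk (α_ h g u) <| by
    change (α_ h g u).hom ▷ s ≫ (α_ h (g ≫ u) s).hom ≫
        h ◁ ((α_ g u s).hom ≫ g ◁ adj.counit ≫ (ρ_ g).hom) =
      (α_ (h ≫ g) u s).hom ≫ (h ≫ g) ◁ adj.counit ≫ (ρ_ (h ≫ g)).hom
    bicategory

def isAbsKanRightLift (adj : s ⊣ u) (g : c ⟶ b) : (adj.rightLift g).IsAbsKan := fun h ↦
  (adj.isKanRightLift _).ofIsoKan (adj.rightLiftWhiskerIso g h)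

end Adjunction

def RightLift.IsKan.adjunction_s2 {s : a ⟶ b} {t : RightLift s (𝟙 b)}
    (H : t.IsKan) (H' : (t.whisker s).IsKan) : s ⊣ t.lift :=
  let η : 𝟙 a ⟶ s ≫ t.lift := H'.desc <| .mk _ <| (λ_ s).hom ≫ (ρ_ s).inv
  have Hη : leftZigzag η t.counit = (λ_ s).hom ≫ (ρ_ s).inv := by
    have Hfac : η ▷ s ≫ (α_ _ _ _).hom ≫ s ◁ t.counit = (λ_ s).hom ≫ (ρ_ s).inv := H'.fac _
    simpa [leftZigzag, bicategoricalComp] using Hfac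
  { unit := η
    counit := t.counit
    left_triangle := Hη
    right_triangle := by
      apply (cancel_epi (ρ_ _).inv).mp
      apply (cancel_mono (λ_ _).hom).mp
      apply H.hom_ext
      calc _
        _ = 𝟙 _ ⊗≫ t.lift ◁ η ▷ s ⊗≫ (t.counit ▷ (t.lift ≫ s) ≫ 𝟙 b ◁ t.counit) ⊗≫ 𝟙 _ := by
          rw [rightZigzag]; bicategory
        _ = 𝟙 _ ⊗≫ t.lift ◁ leftZigzag η t.counit ⊗≫ t.counit ⊗≫ 𝟙 _ := by
          rw [leftZigzag, ← whisker_exchange]; bicategory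
        _ = _ := by
          rw [Hη]; bicategory }

end CategoryTheory.Bicategory

/-- a 1-cell `s : a ⟶ b` has a right adjoint if and only if for every 1-cell
`g : c ⟶ b` the right lifting of `g` through `s` exists and is absolute. -/
theorem isLeftAdjoint_iff_forall_absolute_rightLift {a b : B} (s : a ⟶ b) :
    IsLeftAdjoint s ↔
      ∀ (c : B) (g : c ⟶ b), ∃ t : RightLift s g,
        Nonempty (RightLift.IsKan t) ∧ RightLiftIsAbsKan t := by
  constructor
  · rintro ⟨⟨u, adj⟩⟩ c g
    exact ⟨adj.rightLift g, ⟨adj.isKanRightLift g⟩, fun _ h ↦ ⟨adj.isAbsKanRightLift g h⟩⟩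
  · intro H
    obtain ⟨t, ⟨hKan⟩, habs⟩ := H b (𝟙 b)
    obtain ⟨hWhisker⟩ := habs a s
    exact .mk (hKan.adjunction_s2 hWhisker)
end

section
/- Let Φ be a class of weights and A a category admitting Φ-colimits (Φ-cocomplete). Let A_Φ be the full subcategory of A on objects a such that the corepresentable functor A(a, −) preserves all Φ-colimits existing in A. Then A_Φ is closed in A under Φ⁻-colimits: if ψ : Kᵒᵖ → V is a weight such that ψ-limits commute with all Φ-colimits in V, and S : K → A lands in A_Φ, and the colimit ψ * S exists in A, then ψ * S lies in A_Φ. -/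
/-!
Write `H : A ⥤ [Kᵒᵖ, Type]` for `a ↦ A(S−, a)`. Let `c'` be a `φ`-colimit of `D : L ⥤ A` with
`φ ∈ Φ`. Each `A(S k, −)` preserves it and colimits of presheaves are computed pointwise, so
`H c'` is the `φ`-colimit of `D ⋙ H`. The universal property of `c = ψ * S` identifies `A(c, −)`
with `[Kᵒᵖ, Type](ψ, H −)`, so `A(c, −)` preserves `c'` because `[Kᵒᵖ, Type](ψ, −)` preserves `H c'`.
-/

open CategoryTheory Opposite

universe v u

section CoendDefs

variable {L : Type v} [SmallCategory L]

/-- Generating relation for the coend `∫^l φ(l) × M(l)`. -/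
def coendRel (φ : Lᵒᵖ ⥤ Type v) (M : L ⥤ Type v) :
    (Σ l : L, φ.obj (op l) × M.obj l) → (Σ l : L, φ.obj (op l) × M.obj l) → Prop :=
  fun p q => ∃ (f : p.1 ⟶ q.1) (x : φ.obj (op q.1)) (m : M.obj p.1),
    p.2 = (φ.map f.op x, m) ∧ q.2 = (x, M.map f m)

/-- The coend `∫^l φ(l) × M(l)` in `Type v`, i.e. the `φ`-weighted colimit of `M`. -/
def Coend (φ : Lᵒᵖ ⥤ Type v) (M : L ⥤ Type v) : Type v :=
  Quot (coendRel φ M)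

/-- Canonical injection into the coend. -/
def Coend.mk (φ : Lᵒᵖ ⥤ Type v) (M : L ⥤ Type v) (l : L) (x : φ.obj (op l)) (m : M.obj l) :
    Coend φ M :=
  Quot.mk _ ⟨l, x, m⟩

/-- Functoriality of the coend in the covariant variable. -/
def coendMap (φ : Lᵒᵖ ⥤ Type v) {M M' : L ⥤ Type v} (α : M ⟶ M') : Coend φ M → Coend φ M' :=
  Quot.map (fun p => ⟨p.1, p.2.1, α.app p.1 p.2.2⟩) (by
    rintro ⟨l, x, m⟩ ⟨l', x', m'⟩ ⟨f, y, n, h1, h2⟩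
    simp only [Prod.mk.injEq] at h1 h2
    refine ⟨f, y, α.app l n, ?_, ?_⟩
    · simp only [Prod.mk.injEq]
      exact ⟨h1.1, congrArg (α.app l) h1.2⟩
    · simp only [Prod.mk.injEq]
      refine ⟨h2.1, ?_⟩
      rw [h2.2]
      exact NatTrans.naturality_apply α f n)

/-- The weighted-colimit functor `φ * − : [L, Type v] ⥤ Type v`. -/
def coendFunctor (φ : Lᵒᵖ ⥤ Type v) : (L ⥤ Type v) ⥤ Type v where
  obj M := Coend φ M
  map α := TypeCat.ofHom (coendMap φ α)
  map_id M := by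
    ext q
    induction q using Quot.ind
    rfl
  map_comp α β := by
    ext q
    induction q using Quot.ind
    rfl

end CoendDefs

section Cmp

variable {K L : Type v} [SmallCategory K] [SmallCategory L]

/-- The canonical comparison `φ * {ψ, S} ⟶ {ψ, φ * S}` in `Type v`, from the `φ`-weighted
colimit of the `ψ`-weighted limits to the `ψ`-weighted limit of the `φ`-weighted colimits. -/
def wcmp (ψ : K ⥤ Type v) (φ : Lᵒᵖ ⥤ Type v) (S : K ⥤ L ⥤ Type v) :
    Coend φ (S.flip ⋙ coyoneda.obj (op ψ)) → (ψ ⟶ S ⋙ coendFunctor φ) :=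
  Quot.lift
    (fun p =>
      { app := fun k => TypeCat.ofHom fun y => Coend.mk φ (S.obj k) p.1 p.2.1 ((p.2.2 : ψ ⟶ S.flip.obj p.1).app k y)
        naturality := by
          intro k k' f
          ext y
          have h := NatTrans.naturality_apply (p.2.2 : ψ ⟶ S.flip.obj p.1) f y
          exact congrArg (Coend.mk φ (S.obj k') p.1 p.2.1) h })
    (by
      rintro ⟨l, x, η⟩ ⟨l', x', η'⟩ ⟨f, y, n, h1, h2⟩
      simp only [Prod.mk.injEq] at h1 h2
      ext k z
      apply Quot.sound
      refine ⟨f, y, n.app k z, ?_, ?_⟩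
      · simp only [Prod.mk.injEq]
        exact ⟨h1.1, by rw [h1.2]⟩
      · simp only [Prod.mk.injEq]
        exact ⟨h2.1, by rw [h2.2]; rfl⟩)

/-- The canonical comparison in the other presentation: from the `φ`-weighted colimit of
`Hom(ψ, U−)` to `Hom(ψ, −)` of the (pointwise) `φ`-weighted colimit of `U`. -/
def wcmp₂ (ψ : K ⥤ Type v) (φ : Lᵒᵖ ⥤ Type v) (U : L ⥤ K ⥤ Type v) :
    Coend φ (U ⋙ coyoneda.obj (op ψ)) → (ψ ⟶ U.flip ⋙ coendFunctor φ) :=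
  Quot.lift
    (fun p =>
      { app := fun k => TypeCat.ofHom fun y => Coend.mk φ (U.flip.obj k) p.1 p.2.1 ((p.2.2 : ψ ⟶ U.obj p.1).app k y)
        naturality := by
          intro k k' f
          ext y
          have h := NatTrans.naturality_apply (p.2.2 : ψ ⟶ U.obj p.1) f y
          exact congrArg (Coend.mk φ (U.flip.obj k') p.1 p.2.1) h })
    (by
      rintro ⟨l, x, η⟩ ⟨l', x', η'⟩ ⟨f, y, n, h1, h2⟩
      simp only [Prod.mk.injEq] at h1 h2
      ext k z
      apply Quot.sound
      refine ⟨f, y, n.app k z, ?_, ?_⟩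
      · simp only [Prod.mk.injEq]
        exact ⟨h1.1, by rw [h1.2]⟩
      · simp only [Prod.mk.injEq]
        exact ⟨h2.1, by rw [h2.2]; rfl⟩)

end Cmp

section WColim

variable {K : Type v} [SmallCategory K] {A : Type u} [Category.{v} A]

/-- `c` is the `φ`-weighted colimit of `S : K ⥤ A`: maps out of `c` correspond, naturally,
to natural transformations `φ ⟶ A(S−, a)`. -/
structure IsWColimit (φ : Kᵒᵖ ⥤ Type v) (S : K ⥤ A) (c : A) where
  e : ∀ a : A, (c ⟶ a) ≃ (φ ⟶ S.op ⋙ yoneda.obj a)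
  nat : ∀ {a a' : A} (f : a ⟶ a') (u : c ⟶ a),
    e a' (u ≫ f) = e a u ≫ Functor.whiskerLeft S.op (yoneda.map f)

/-- The canonical comparison map from the `φ`-weighted colimit of `S ⋙ F` in `Type v` to the
image under `F` of the `φ`-weighted colimit of `S`; `F` preserves the weighted colimit exactly
when this map is bijective. -/
def wcCompare (φ : Kᵒᵖ ⥤ Type v) (S : K ⥤ A) (c : A) (w : IsWColimit φ S c)
    (F : A ⥤ Type v) : Coend φ (S ⋙ F) → F.obj c :=
  Quot.lift
    (fun p => F.map ((w.e c (𝟙 c)).app (op p.1) p.2.1) p.2.2)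
    (by
      rintro ⟨l, x, m⟩ ⟨l', x', m'⟩ ⟨f, y, n, h1, h2⟩
      simp only [Prod.mk.injEq] at h1 h2
      obtain ⟨hx, hm⟩ := h1
      obtain ⟨hx', hm'⟩ := h2
      rw [hx, hm, hx', hm']
      dsimp only
      have h := NatTrans.naturality_apply (w.e c (𝟙 c)) f.op y
      rw [h]
      dsimp
      rw [FunctorToTypes.map_comp_apply])

end WColim

namespace IsWColimit

variable {K : Type v} [SmallCategory K] {A : Type u} [Category.{v} A]

def ofIso {φ : Kᵒᵖ ⥤ Type v} {S : K ⥤ A} {c c₂ : A} (w : IsWColimit φ S c) (θ : c ≅ c₂) :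
    IsWColimit φ S c₂ where
  e a :=
    { toFun := fun u => w.e a (θ.hom ≫ u)
      invFun := fun η => θ.inv ≫ (w.e a).symm η
      left_inv := fun u => by simp
      right_inv := fun η => by simp }
  nat f u := by
    dsimp
    rw [← Category.assoc, w.nat]

def coyonedaIso {ψ : Kᵒᵖ ⥤ Type v} {S : K ⥤ A} {c : A} (w : IsWColimit ψ S c) :
    coyoneda.obj (op c) ≅
      yoneda ⋙ (Functor.whiskeringLeft _ _ _).obj S.op ⋙ coyoneda.obj (op ψ) :=
  NatIso.ofComponents (fun a => (w.e a).toIso) (fun f => by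
    ext u
    exact w.nat f u)

end IsWColimit

section Coend

variable {L : Type v} [SmallCategory L]

lemma bijective_coendMap (φ : Lᵒᵖ ⥤ Type v) {M M' : L ⥤ Type v} (α : M ≅ M') :
    Function.Bijective (coendMap φ α.hom) :=
  ((coendFunctor φ).mapIso α).toEquiv.bijective

variable {K : Type v} [SmallCategory K]

def isWColimitPointwiseCoend (φ : Lᵒᵖ ⥤ Type v) (E : L ⥤ (Kᵒᵖ ⥤ Type v)) :
    IsWColimit φ E (E.flip ⋙ coendFunctor φ) where
  e Q :=
    { toFun := fun u =>
        { app := fun l => TypeCat.ofHom fun x =>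
            { app := fun k => TypeCat.ofHom fun m => u.app k (Coend.mk φ (E.flip.obj k) l.unop x m)
              naturality := by
                intro k k' κ
                ext m
                exact NatTrans.naturality_apply u κ (Coend.mk φ (E.flip.obj k) l.unop x m) }
          naturality := by
            intro l l' f
            apply ConcreteCategory.hom_ext
            intro x
            apply NatTrans.ext
            funext k
            ext m
            exact congrArg (u.app k) (Quot.sound ⟨f.unop, x, m, rfl, rfl⟩) }
      invFun := fun η =>
        { app := fun k => TypeCat.ofHom (Quot.lift (fun p => (η.app (op p.1) p.2.1).app k p.2.2) (by
            rintro ⟨l, x, m⟩ ⟨l', x', m'⟩ ⟨f, y, n, h₁, h₂⟩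
            simp only [Prod.mk.injEq] at h₁ h₂
            rw [h₁.1, h₁.2, h₂.1, h₂.2]
            exact congrArg (fun ξ => (ξ : E.obj l ⟶ _).app k n) (NatTrans.naturality_apply η f.op y)))
          naturality := by
            intro k k' κ
            ext ⟨l, x, m⟩
            exact NatTrans.naturality_apply (η.app (op l) x) κ m }
      left_inv := fun u => by
        ext k q
        induction q using Quot.ind
        rfl
      right_inv := fun η => rfl }
  nat _ _ := rfl

end Coend

section Compare

variable {L : Type v} [SmallCategory L] {A : Type u} [Category.{v} A]
  {φ : Lᵒᵖ ⥤ Type v} {D : L ⥤ A} {c : A} (w : IsWColimit φ D c)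

lemma wcCompare_naturality {F G : A ⥤ Type v} (α : F ⟶ G) :
    α.app c ∘ wcCompare φ D c w F = wcCompare φ D c w G ∘ coendMap φ (Functor.whiskerLeft D α) := by
  funext q
  induction q using Quot.ind with
  | _ p => exact NatTrans.naturality_apply α ((w.e c (𝟙 c)).app (op p.1) p.2.1) p.2.2

lemma bijective_wcCompare_iff_of_iso {F G : A ⥤ Type v} (α : F ≅ G) :
    Function.Bijective (wcCompare φ D c w F) ↔ Function.Bijective (wcCompare φ D c w G) := by
  rw [← (bijective_coendMap φ (Functor.isoWhiskerLeft D α)).of_comp_iff,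
    Functor.isoWhiskerLeft_hom, ← wcCompare_naturality]
  exact (((α.app c).toEquiv.bijective).of_comp_iff' _).symm

lemma wcCompare_comp {B : Type*} [Category.{v} B] (H : A ⥤ B) (w₂ : IsWColimit φ (D ⋙ H) (H.obj c))
    (hunit : ∀ l x, (w₂.e _ (𝟙 _)).app l x = H.map ((w.e c (𝟙 c)).app l x)) (G : B ⥤ Type v) :
    wcCompare φ (D ⋙ H) (H.obj c) w₂ G = wcCompare φ D c w (H ⋙ G) := by
  funext q
  induction q using Quot.ind with
  | _ p => exact congrArg (fun f => G.map f p.2.2) (hunit _ _)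

variable {K : Type v} [SmallCategory K]

noncomputable def IsWColimit.mapOfEvaluation (H : A ⥤ (Kᵒᵖ ⥤ Type v))
    (hH : ∀ k, Function.Bijective (wcCompare φ D c w (H ⋙ (evaluation _ _).obj k))) :
    IsWColimit φ (D ⋙ H) (H.obj c) :=
  (isWColimitPointwiseCoend φ (D ⋙ H)).ofIso <|
    NatIso.ofComponents (fun k => (Equiv.ofBijective _ (hH k)).toIso) (fun κ => by
      ext q
      exact (congrFun (wcCompare_naturality w
        (Functor.whiskerLeft H ((evaluation _ _).map κ))) q).symm)

lemma IsWColimit.mapOfEvaluation_e_id_app (H : A ⥤ (Kᵒᵖ ⥤ Type v))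
    (hH : ∀ k, Function.Bijective (wcCompare φ D c w (H ⋙ (evaluation _ _).obj k))) (l x) :
    ((w.mapOfEvaluation H hH).e _ (𝟙 _)).app l x = H.map ((w.e c (𝟙 c)).app l x) :=
  rfl

end Compare

theorem atoms_closed_under_minus_colimits_general {A : Type u} [Category.{v} A]
    (Φ : ∀ (L : Type v) [SmallCategory L], (Lᵒᵖ ⥤ Type v) → Prop)
    {K : Type v} [SmallCategory K] (ψ : Kᵒᵖ ⥤ Type v)
    (hψ : ∀ (L : Type v) [SmallCategory L] (φ : Lᵒᵖ ⥤ Type v), Φ L φ →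
      ∀ (D : L ⥤ (Kᵒᵖ ⥤ Type v)) (c : Kᵒᵖ ⥤ Type v) (w : IsWColimit φ D c),
        Function.Bijective (wcCompare φ D c w (coyoneda.obj (Opposite.op ψ))))
    (S : K ⥤ A)
    (hS : ∀ (k : K) (L : Type v) [SmallCategory L] (φ : Lᵒᵖ ⥤ Type v), Φ L φ →
      ∀ (D : L ⥤ A) (c : A) (w : IsWColimit φ D c),
        Function.Bijective (wcCompare φ D c w (coyoneda.obj (Opposite.op (S.obj k)))))
    (c : A) (w : IsWColimit ψ S c) :
    ∀ (L : Type v) [SmallCategory L] (φ : Lᵒᵖ ⥤ Type v), Φ L φ →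
      ∀ (D : L ⥤ A) (c' : A) (w' : IsWColimit φ D c'),
        Function.Bijective (wcCompare φ D c' w' (coyoneda.obj (Opposite.op c))) := by
  intro L _ φ hφ D c' w'
  let H : A ⥤ (Kᵒᵖ ⥤ Type v) := yoneda ⋙ (Functor.whiskeringLeft _ _ _).obj S.op
  have hH : ∀ k, Function.Bijective (wcCompare φ D c' w' (H ⋙ (evaluation _ _).obj k)) :=
    fun k => hS k.unop L φ hφ D c' w'
  have hψH := hψ L φ hφ (D ⋙ H) (H.obj c') (w'.mapOfEvaluation H hH)
  rw [wcCompare_comp w' H _ (w'.mapOfEvaluation_e_id_app H hH)] at hψH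
  exact (bijective_wcCompare_iff_of_iso w' w.coyonedaIso).2 hψH

/-- let `Φ` be a class of weights and `A` a `Φ`-cocomplete category. If `ψ` is a
weight whose limits commute in `Type v` with all `Φ`-colimits, `S : K ⥤ A` takes values in the
full subcategory `A_Φ` of objects whose covariant hom-functor preserves `Φ`-colimits, and the
weighted colimit `ψ * S` exists (with colimit object `c`), then `c` lies in `A_Φ`. -/
theorem atoms_closed_under_minus_colimits {A : Type u} [Category.{v} A]
    (Φ : ∀ (L : Type v) [SmallCategory L], (Lᵒᵖ ⥤ Type v) → Prop)
    (hA : ∀ (L : Type v) [SmallCategory L] (φ : Lᵒᵖ ⥤ Type v), Φ L φ →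
      ∀ D : L ⥤ A, ∃ c : A, Nonempty (IsWColimit φ D c))
    {K : Type v} [SmallCategory K] (ψ : Kᵒᵖ ⥤ Type v)
    (hψ : ∀ (L : Type v) [SmallCategory L] (φ : Lᵒᵖ ⥤ Type v), Φ L φ →
      ∀ (D : L ⥤ (Kᵒᵖ ⥤ Type v)) (c : Kᵒᵖ ⥤ Type v) (w : IsWColimit φ D c),
        Function.Bijective (wcCompare φ D c w (coyoneda.obj (Opposite.op ψ))))
    (S : K ⥤ A)
    (hS : ∀ (k : K) (L : Type v) [SmallCategory L] (φ : Lᵒᵖ ⥤ Type v), Φ L φ →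
      ∀ (D : L ⥤ A) (c : A) (w : IsWColimit φ D c),
        Function.Bijective (wcCompare φ D c w (coyoneda.obj (Opposite.op (S.obj k)))))
    (c : A) (w : IsWColimit ψ S c) :
    ∀ (L : Type v) [SmallCategory L] (φ : Lᵒᵖ ⥤ Type v), Φ L φ →
      ∀ (D : L ⥤ A) (c' : A) (w' : IsWColimit φ D c'),
        Function.Bijective (wcCompare φ D c' w' (coyoneda.obj (Opposite.op c))) :=
  atoms_closed_under_minus_colimits_general Φ ψ hψ S hS c w
end

section
/- Let B be a small category. For any presheaf F : Bᵒᵖ → Type*, the following are equivalent: (i) the corresponding profunctor (module) from the unit category to B has a right adjoint in the bicategory of profunctors; (ii) the representable functor Hom(F, −) : [Bᵒᵖ, Type*] → Type* preserves all small colimits; and when these hold, the right adjoint module is given by b ↦ Hom_{[Bᵒᵖ,Type*]}(F, Yb), where Y is the Yoneda embedding. -/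
/-!
A right adjoint of the profunctor `𝟙 ⇸ B` given by `F` is the same thing as a splitting of `F`
off a representable: the counit at the unit's representative `(b₀, g₀, x₀)` gives
`F ⟶ y b₀`, the element `x₀` gives `y b₀ ⟶ F`, and the first triangle identity says that the
composite is `𝟙 F`. Conversely a retraction `F ⟶ y b ⟶ F` is an adjunction whose right
adjoint is `Hom(F, y -)`, and every right adjoint `G` is identified with that one by
`y ↦ ε(-, y)`.

`Hom(y b, -)` is evaluation at `b`, so it preserves colimits, hence so does its retract
`Hom(F, -)`. Conversely, if `Hom(F, -)` preserves colimits, applying it to `F` written as the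
colimit of the representables over it shows that `𝟙 F` factors through some `y b`.
-/

open CategoryTheory Opposite

universe v u u'

variable {B : Type v} [SmallCategory B]

/-- An adjunction `f ⊣ g` in the bicategory of `Type v`-valued profunctors, where
`f : 𝟙 ⇸ B` corresponds to the presheaf `F : Bᵒᵖ ⥤ Type v` and `g : B ⇸ 𝟙` corresponds to
the copresheaf `G : B ⥤ Type v`.  The counit `f ∘ g ⟶ 1_B` is a natural family
`ε : F(b') × G(b) → B(b', b)`, and the unit `1_𝟙 ⟶ g ∘ f` is an element of the coend
`∫^b G(b) × F(b)`, given by a representative `(b₀, g₀, x₀)`; the two triangle identities are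
`tri₁` and `tri₂`. -/
structure ProfAdj (F : Bᵒᵖ ⥤ Type v) (G : B ⥤ Type v) where
  ε : ∀ {b b' : B}, F.obj (op b') → G.obj b → (b' ⟶ b)
  ε_natl : ∀ {b b' b'' : B} (h : b'' ⟶ b') (x : F.obj (op b')) (y : G.obj b),
    ε (F.map h.op x) y = h ≫ ε x y
  ε_natr : ∀ {b b' b'' : B} (k : b ⟶ b'') (x : F.obj (op b')) (y : G.obj b),
    ε x (G.map k y) = ε x y ≫ k
  b₀ : B
  g₀ : G.obj b₀
  x₀ : F.obj (op b₀)
  tri₁ : ∀ (b : B) (x : F.obj (op b)), F.map (ε x g₀).op x₀ = x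
  tri₂ : ∀ (b : B) (y : G.obj b), G.map (ε x₀ y) g₀ = y

open Limits

namespace CategoryTheory.Retract

variable {C : Type*} [Category C] {D : Type*} [Category D] {J : Type*} [Category J]
  {T S : C ⥤ D}

@[simp]
theorem app_retract (r : Retract T S) (X : C) : r.i.app X ≫ r.r.app X = 𝟙 (T.obj X) :=
  (r.map ((evaluation C D).obj X)).retract

noncomputable def colimitPost (r : Retract T S) (K : J ⥤ C) [HasColimit K]
    [HasColimitsOfShape J D] : RetractArrow (colimit.post K T) (colimit.post K S) where
  i := Arrow.homMk (colim.map (Functor.whiskerLeft K r.i)) (r.i.app (colimit K))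
    (colimit.hom_ext fun j => by simp)
  r := Arrow.homMk (colim.map (Functor.whiskerLeft K r.r)) (r.r.app (colimit K))
    (colimit.hom_ext fun j => by simp)
  retract := by
    ext
    · exact colimit.hom_ext fun j => by simp [reassoc_of% r.app_retract]
    · simp

theorem preservesColimit (r : Retract T S) (K : J ⥤ C) [HasColimit K]
    [HasColimitsOfShape J D] [PreservesColimit K S] : PreservesColimit K T :=
  have : IsIso (colimit.post K T) :=
    (MorphismProperty.isomorphisms D).of_retract (r.colimitPost K) (inferInstance : IsIso _)
  preservesColimit_of_isIso_post (F := K) (G := T)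

theorem preservesColimitsOfSize.{w, w'} [HasColimitsOfSize.{w, w'} C]
    [HasColimitsOfSize.{w, w'} D] (r : Retract T S) [PreservesColimitsOfSize.{w, w'} S] :
    PreservesColimitsOfSize.{w, w'} T :=
  ⟨fun {_} _ => ⟨fun {K} => r.preservesColimit K⟩⟩

end CategoryTheory.Retract

theorem CategoryTheory.Retract.map_i_yonedaEquiv_r {C : Type u} [Category.{v} C]
    {F : Cᵒᵖ ⥤ Type v} {c : C} (h : Retract F (yoneda.obj c)) {c' : C}
    (x : F.obj (Opposite.op c')) :
    F.map (h.i.app (Opposite.op c') x).op (yonedaEquiv h.r) = x := by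
  rw [map_yonedaEquiv]
  exact ConcreteCategory.congr_hom (h.app_retract (Opposite.op c')) x

theorem preservesColimits_coyoneda_of_retract_yoneda {F : Bᵒᵖ ⥤ Type v} {b : B}
    (h : Retract F (yoneda.obj b)) : PreservesColimits (coyoneda.obj (op F)) :=
  have : PreservesColimits (coyoneda.obj (op (yoneda.obj b))) := ⟨⟨inferInstance⟩⟩
  (h.op.map coyoneda).preservesColimitsOfSize

theorem exists_retract_yoneda_of_preservesColimits (F : Bᵒᵖ ⥤ Type v)
    [PreservesColimits (coyoneda.obj (op F))] : ∃ b : B, Nonempty (Retract F (yoneda.obj b)) := by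
  obtain ⟨hF⟩ := PreservesColimit.preserves (F := coyoneda.obj (op F))
    (Presheaf.isColimitTautologicalCocone F)
  obtain ⟨X, i, hi⟩ := Types.jointly_surjective _ hF (𝟙 F)
  exact ⟨X.left, ⟨{ i := i, r := X.hom, retract := hi }⟩⟩

namespace ProfAdj

variable {F : Bᵒᵖ ⥤ Type v} {G : B ⥤ Type v}

@[simps]
def toYoneda (A : ProfAdj F G) {b : B} (y : G.obj b) : F ⟶ yoneda.obj b where
  app b' := TypeCat.ofHom fun x => A.ε (b' := unop b') x y
  naturality _ _ f := by ext x; simpa using A.ε_natl f.unop x y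

def retractYoneda (A : ProfAdj F G) : Retract F (yoneda.obj A.b₀) where
  i := A.toYoneda A.g₀
  r := yonedaEquiv.symm A.x₀
  retract := by ext b x; exact A.tri₁ (unop b) x

def ofRetractYoneda {b : B} (h : Retract F (yoneda.obj b)) :
    ProfAdj F (yoneda ⋙ coyoneda.obj (op F)) where
  ε x y := y.app _ x
  ε_natl f x y := ConcreteCategory.congr_hom (y.naturality f.op) x
  ε_natr _ _ _ := rfl
  b₀ := b
  g₀ := h.i
  x₀ := yonedaEquiv h.r
  tri₁ _ := h.map_i_yonedaEquiv_r
  tri₂ b' y := by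
    refine NatTrans.ext (funext fun b'' => ?_)
    ext x
    have hy := NatTrans.naturality_apply y (h.i.app b'' x).op (yonedaEquiv h.r)
    rw [h.map_i_yonedaEquiv_r] at hy
    simpa using hy.symm

def equivHomYoneda (A : ProfAdj F G) (b : B) : G.obj b ≃ (F ⟶ yoneda.obj b) where
  toFun := A.toYoneda
  invFun ψ := G.map (ψ.app _ A.x₀) A.g₀
  left_inv := A.tri₂ b
  right_inv ψ := by
    refine NatTrans.ext (funext fun b' => ?_)
    ext x
    have hψ := NatTrans.naturality_apply ψ (A.ε x A.g₀).op A.x₀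
    rw [A.tri₁] at hψ
    simpa [A.ε_natr] using hψ.symm

def isoYonedaCompCoyoneda (A : ProfAdj F G) : G ≅ yoneda ⋙ coyoneda.obj (op F) :=
  NatIso.ofComponents (fun b => (A.equivHomYoneda b).toIso) fun k => by
    ext y
    exact NatTrans.ext (funext fun b' => by ext x; exact A.ε_natr k x y)

end ProfAdj

/-- for a presheaf `F : Bᵒᵖ ⥤ Type v` on a small category, the corresponding
profunctor `𝟙 ⇸ B` has a right adjoint iff the representable functor
`Hom(F, −) : [Bᵒᵖ, Type v] ⥤ Type v` preserves all small colimits; and when these hold, the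
right adjoint module is `b ↦ Hom(F, Yb)`. -/
theorem profunctor_rightAdjoint_iff_homPreservesColimits (F : Bᵒᵖ ⥤ Type v) :
    ((∃ G : B ⥤ Type v, Nonempty (ProfAdj F G)) ↔
        Nonempty (Limits.PreservesColimits (coyoneda.obj (op F)))) ∧
      (∀ G : B ⥤ Type v, ProfAdj F G →
        Nonempty (G ≅ yoneda ⋙ coyoneda.obj (op F))) := by
  constructor
  · constructor
    · rintro ⟨_, ⟨A⟩⟩
      exact ⟨preservesColimits_coyoneda_of_retract_yoneda A.retractYoneda⟩
    · rintro ⟨_⟩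
      obtain ⟨b, ⟨h⟩⟩ := exists_retract_yoneda_of_preservesColimits F
      exact ⟨_, ⟨ProfAdj.ofRetractYoneda h⟩⟩
  · exact fun _ A => ⟨A.isoYonedaCompCoyoneda⟩
end

section
/- Let B be a small category and G : B → Type*. If G is a weight for absolute colimits (i.e., every G-weighted colimit in every category is preserved by every functor), then the corresponding profunctor g : B ⇸ 1 has a left adjoint in the bicategory of profunctors, given by b ↦ Hom_{[B,Type*]}(G, coYoneda(b)) where coYoneda(b) = B(b, −). -/
open CategoryTheory Opposite

universe v u u'

variable {B : Type v} [SmallCategory B]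

section WColim

variable {A : Type u} [Category.{v} A] {C : Type u'} [Category.{v} C]

/-- `c` is the `G`-weighted colimit of `S : Bᵒᵖ ⥤ A` (for a covariant weight
`G : B ⥤ Type v`): maps out of `c` correspond, naturally, to natural transformations
`G ⟶ A(S−, a)`. -/
structure WColim (G : B ⥤ Type v) (S : Bᵒᵖ ⥤ A) (c : A) where
  e : ∀ a : A, (c ⟶ a) ≃ (G ⟶ S.rightOp ⋙ yoneda.obj a)
  nat : ∀ {a a' : A} (f : a ⟶ a') (u : c ⟶ a),
    e a' (u ≫ f) = e a u ≫ Functor.whiskerLeft S.rightOp (yoneda.map f)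

/-- The image under a functor `T : A ⥤ C` of a weighted colimit cocone. -/
def unitImage (G : B ⥤ Type v) (S : Bᵒᵖ ⥤ A) (c : A) (T : A ⥤ C)
    (η : G ⟶ S.rightOp ⋙ yoneda.obj c) :
    G ⟶ (S ⋙ T).rightOp ⋙ yoneda.obj (T.obj c) where
  app b := TypeCat.ofHom fun g => T.map (η.app b g)
  naturality := by
    intro b b' f
    ext g
    have h := NatTrans.naturality_apply η f g
    dsimp at h ⊢
    rw [h, T.map_comp]

end WColim

/-!
If `G` is absolute, `Hom(G, -)` preserves the weighted colimit `G ⋆ Y' ≅ G`, so `𝟙 G` factors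
through a single leg `B(b₀, -) ⟶ G`: `G` is a retract of a representable, and such a retract
`x₀ : G ⟶ B(b₀, -)`, `g₀ ∈ G b₀` is exactly the unit and counit of `Hom(G, Y' -) ⊣ G`.

The diagram has to live in a category whose objects form a `Type u` for arbitrary `u`, so `Y'`
cannot be used directly. Instead all representables are packed into one presheaf `P` of normal
words `f₁ ⋯ fₙ · u` (arrows of `B`, composable neighbours merged, identities dropped, last arrow
`u` into the argument), on which `Bᵒᵖ` acts by prepending letters, and the weighted colimit is the
coend `Q = G ⊗_B P`. Testing against `Prop` shows that the tautological `γ : G ⟶ Q` factors as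
`β ≫ ι_{b₀,g₀}`; as `γ` involves only one-letter words, comparing normal forms forces `β` to take
values in one-letter words `x : b₀ ⟶ y`, which is the retraction.
-/

lemma WColim.hom_ext {A : Type u} [Category.{v} A] {G : B ⥤ Type v} {S : Bᵒᵖ ⥤ A} {c : A}
    (w : WColim G S c) {a : A} {φ ψ : c ⟶ a}
    (h : ∀ b (g : G.obj b), (w.e c (𝟙 c)).app b g ≫ φ = (w.e c (𝟙 c)).app b g ≫ ψ) : φ = ψ := by
  apply (w.e a).injective
  rw [← Category.id_comp φ, ← Category.id_comp ψ, w.nat, w.nat]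
  ext b g
  exact h b g

def ProfAdj.ofRetract {G : B ⥤ Type v} {b₀ : B} (R : Retract G (coyoneda.obj (op b₀))) :
    ProfAdj (coyoneda ⋙ coyoneda.obj (op G)) G :=
  have tri₂ : ∀ (b : B) (y : G.obj b), G.map (R.i.app b y) (coyonedaEquiv R.r) = y := by
    intro b y
    calc G.map (R.i.app b y) (R.r.app b₀ (𝟙 b₀)) = R.r.app b (𝟙 b₀ ≫ R.i.app b y) :=
          (NatTrans.naturality_apply R.r _ _).symm
      _ = (R.i ≫ R.r).app b y := by rw [Category.id_comp]; rfl
      _ = y := by rw [R.retract]; rfl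
  { ε := fun x y => x.app _ y
    ε_natl := fun _ _ _ => rfl
    ε_natr := fun k x y => NatTrans.naturality_apply x k y
    b₀ := b₀
    g₀ := coyonedaEquiv R.r
    x₀ := R.i
    tri₁ := fun b x => by
      refine NatTrans.ext (funext fun b' => ConcreteCategory.hom_ext _ _ fun y => ?_)
      exact (NatTrans.naturality_apply x _ _).symm.trans (congrArg (x.app b') (tri₂ b' y))
    tri₂ := tri₂ }

namespace AbsoluteWeight

def IsIdentity {a b : B} (f : a ⟶ b) : Prop := ∃ h : a = b, f = eqToHom h

lemma isIdentity_id (a : B) : IsIdentity (𝟙 a) := ⟨rfl, rfl⟩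

/-- `⟨a, t⟩ : Word y` is the word `f₁ ⋯ fₙ · u` with source `a`: the `fᵢ` are non-identity
arrows, no two neighbours are composable, and `u : c ⟶ y` is arbitrary. -/
inductive NormalWord (y : B) : B → Type v
  | nil {c : B} (u : c ⟶ y) : NormalWord y c
  | cons {a b c : B} (f : a ⟶ b) (hf : ¬ IsIdentity f) (hbc : b ≠ c) (t : NormalWord y c) :
      NormalWord y a

abbrev Word (y : B) : Type v := Σ c, NormalWord y c

namespace NormalWord

variable {y y' y'' a c d e : B}

def map (v : y ⟶ y') : {c : B} → NormalWord y c → NormalWord y' c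
  | _, nil u => nil (u ≫ v)
  | _, cons f hf hbc t => cons f hf hbc (t.map v)

lemma map_id (t : NormalWord y c) : t.map (𝟙 y) = t := by
  induction t with
  | nil u => simp [map]
  | cons f hf hbc t ih => simp [map, ih]

lemma map_map (v : y ⟶ y') (w : y' ⟶ y'') (t : NormalWord y c) :
    (t.map v).map w = t.map (v ≫ w) := by
  induction t with
  | nil u => simp [map]
  | cons f hf hbc t ih => simp [map, ih]

open Classical in
noncomputable def precomp : {c : B} → (a ⟶ c) → NormalWord y c → Word y
  | _, f, nil u => ⟨a, nil (f ≫ u)⟩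
  | _, f, cons (c := e) g _ hde t =>
      if hfg : IsIdentity (f ≫ g) then ⟨e, t⟩ else ⟨a, cons (f ≫ g) hfg hde t⟩

@[simp]
lemma precomp_nil (f : a ⟶ c) (u : c ⟶ y) : (nil u).precomp f = ⟨a, nil (f ≫ u)⟩ := rfl

lemma precomp_cons_of_isIdentity {f : a ⟶ c} {g : c ⟶ d} (hfg : IsIdentity (f ≫ g))
    (hg : ¬ IsIdentity g) (hde : d ≠ e) (t : NormalWord y e) :
    (cons g hg hde t).precomp f = ⟨e, t⟩ := dif_pos hfg

lemma precomp_cons {f : a ⟶ c} {g : c ⟶ d} (hfg : ¬ IsIdentity (f ≫ g))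
    (hg : ¬ IsIdentity g) (hde : d ≠ e) (t : NormalWord y e) :
    (cons g hg hde t).precomp f = ⟨a, cons (f ≫ g) hfg hde t⟩ := dif_neg hfg

lemma precomp_id (t : NormalWord y c) : t.precomp (𝟙 c) = ⟨c, t⟩ := by
  cases t with
  | nil u => simp
  | cons g hg hde t =>
    rw [precomp_cons (by simpa using hg)]
    simp

end NormalWord

open NormalWord

namespace Word

variable {y y' y'' : B}

def map (v : y ⟶ y') (p : Word y) : Word y' := ⟨p.1, p.2.map v⟩

lemma map_id (p : Word y) : p.map (𝟙 y) = p := by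
  simp [map, NormalWord.map_id]

lemma map_map (v : y ⟶ y') (w : y' ⟶ y'') (p : Word y) : (p.map v).map w = p.map (v ≫ w) := by
  simp [map, NormalWord.map_map]

end Word

lemma NormalWord.precomp_map {y y' a c : B} (v : y ⟶ y') (f : a ⟶ c) (t : NormalWord y c) :
    (t.map v).precomp f = (t.precomp f).map v := by
  cases t with
  | nil u => simp [NormalWord.map, Word.map]
  | cons g hg hde t =>
    by_cases hfg : IsIdentity (f ≫ g)
    · rw [NormalWord.map, precomp_cons_of_isIdentity hfg, precomp_cons_of_isIdentity hfg]; rfl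
    · rw [NormalWord.map, precomp_cons hfg, precomp_cons hfg]; rfl

open Classical in
noncomputable def prepend {y a b : B} (f : a ⟶ b) (p : Word y) : Word y :=
  if h : b = p.1 then p.2.precomp (f ≫ eqToHom h)
  else if hf : IsIdentity f then p else ⟨a, cons f hf h p.2⟩

section Prepend

variable {y a b c d : B}

lemma prepend_self (f : a ⟶ b) (t : NormalWord y b) : prepend f ⟨b, t⟩ = t.precomp f := by
  simp [prepend]

lemma prepend_of_ne {f : a ⟶ b} (hf : ¬ IsIdentity f) (h : b ≠ c) (t : NormalWord y c) :
    prepend f ⟨c, t⟩ = ⟨a, cons f hf h t⟩ := by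
  simp [prepend, h, hf]

lemma prepend_id (p : Word y) : prepend (𝟙 b) p = p := by
  obtain ⟨c, t⟩ := p
  by_cases h : b = c
  · subst h
    rw [prepend_self, precomp_id]
  · simp [prepend, h, isIdentity_id]

lemma prepend_precomp (f : a ⟶ b) (g : b ⟶ c) (t : NormalWord y c) :
    prepend f (t.precomp g) = t.precomp (f ≫ g) := by
  by_cases hf : IsIdentity f
  · obtain ⟨rfl, rfl⟩ := hf
    rw [eqToHom_refl, prepend_id, Category.id_comp]
  cases t with
  | nil u => simp [prepend_self]
  | @cons _ d e m hm hde t =>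
    by_cases hgm : IsIdentity (g ≫ m)
    · obtain ⟨rfl, hgm⟩ := hgm
      have hfgm : (f ≫ g) ≫ m = f := by simp [hgm]
      rw [precomp_cons_of_isIdentity ⟨rfl, hgm⟩, prepend_of_ne hf hde, precomp_cons (by rwa [hfgm])]
      simp only [hfgm]
    · rw [precomp_cons hgm, prepend_self]
      by_cases hfgm : IsIdentity (f ≫ g ≫ m)
      · rw [precomp_cons_of_isIdentity hfgm, precomp_cons_of_isIdentity (by simpa using hfgm)]
      · rw [precomp_cons hfgm, precomp_cons (by simpa using hfgm)]
        simp

lemma prepend_comp (f : a ⟶ b) (g : b ⟶ d) (p : Word y) :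
    prepend f (prepend g p) = prepend (f ≫ g) p := by
  obtain ⟨c, t⟩ := p
  by_cases hdc : d = c
  · subst hdc
    rw [prepend_self, prepend_self, prepend_precomp]
  · by_cases hg : IsIdentity g
    · obtain ⟨rfl, rfl⟩ := hg
      simp [prepend_id]
    · rw [prepend_of_ne hg hdc, prepend_self]
      by_cases hfg : IsIdentity (f ≫ g)
      · rw [precomp_cons_of_isIdentity hfg]
        obtain ⟨rfl, hfg⟩ := hfg
        simp [hfg, prepend_id]
      · rw [precomp_cons hfg, prepend_of_ne hfg hdc]

lemma prepend_map {y' : B} (v : y ⟶ y') (f : a ⟶ b) (p : Word y) :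
    prepend f (p.map v) = (prepend f p).map v := by
  obtain ⟨c, t⟩ := p
  by_cases h : b = c
  · subst h
    rw [Word.map, prepend_self, prepend_self, precomp_map]
  · by_cases hf : IsIdentity f
    · obtain ⟨rfl, rfl⟩ := hf
      simp only [eqToHom_refl, prepend_id]
    · rw [Word.map, prepend_of_ne hf h, prepend_of_ne hf h]; rfl

end Prepend

def wordsFunctor : B ⥤ Type v where
  obj := Word
  map v := TypeCat.ofHom (Word.map v)
  map_id _ := ConcreteCategory.hom_ext _ _ Word.map_id
  map_comp v w := ConcreteCategory.hom_ext _ _ fun p => (Word.map_map v w p).symm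

noncomputable def prependNat {a b : B} (f : a ⟶ b) : (wordsFunctor : B ⥤ Type v) ⟶ wordsFunctor where
  app y := TypeCat.ofHom (prepend f)
  naturality y y' v := by ext p; exact prepend_map v f p

open Classical in
noncomputable def homOf {y : B} (b : B) : Word y → Option (b ⟶ y)
  | ⟨c, nil u⟩ => if h : b = c then some (eqToHom h ≫ u) else none
  | ⟨_, cons ..⟩ => none

lemma homOf_self_nil {y c : B} (u : c ⟶ y) : homOf c ⟨c, nil u⟩ = some u := by
  simp [homOf]

lemma homOf_map {y y' : B} (b : B) (v : y ⟶ y') (p : Word y) :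
    homOf b (p.map v) = (homOf b p).map (· ≫ v) := by
  obtain ⟨c, t | t⟩ := p
  · by_cases h : b = c
    · subst h; simp [homOf, Word.map, NormalWord.map]
    · simp [homOf, Word.map, NormalWord.map, h]
  · rfl

lemma homOf_of_ne {y b c : B} (h : b ≠ c) (t : NormalWord y c) : homOf b ⟨c, t⟩ = none := by
  cases t with
  | nil u => simp [homOf, h]
  | cons => rfl

lemma homOf_prepend {y a b : B} (f : a ⟶ b) (p : Word y) :
    homOf a (prepend f p) = (homOf b p).map (f ≫ ·) := by
  obtain ⟨c, t⟩ := p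
  by_cases hbc : b = c
  · subst hbc
    rw [prepend_self]
    cases t with
    | nil u => simp [homOf_self_nil]
    | @cons _ d e g hg hde t =>
      by_cases hfg : IsIdentity (f ≫ g)
      · rw [precomp_cons_of_isIdentity hfg, homOf_of_ne (by obtain ⟨rfl, -⟩ := hfg; exact hde)]
        rfl
      · rw [precomp_cons hfg]
        rfl
  · rw [homOf_of_ne hbc, Option.map_none]
    by_cases hf : IsIdentity f
    · obtain ⟨rfl, rfl⟩ := hf
      rw [eqToHom_refl, prepend_id, homOf_of_ne hbc]
    · rw [prepend_of_ne hf hbc]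
      rfl

variable (G : B ⥤ Type v)

inductive CoendRel (y : B) : (Σ b, G.obj b × Word y) → (Σ b, G.obj b × Word y) → Prop
  | mk {b b' : B} (f : b ⟶ b') (g : G.obj b) (p : Word y) :
      CoendRel y ⟨b', G.map f g, p⟩ ⟨b, g, prepend f p⟩

noncomputable def coendFunctor : B ⥤ Type v where
  obj y := Quot (CoendRel G y)
  map v := TypeCat.ofHom <| Quot.map (fun x => ⟨x.1, x.2.1, x.2.2.map v⟩) <| by
    rintro _ _ ⟨f, g, p⟩
    rw [← prepend_map]
    exact CoendRel.mk f g (p.map v)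
  map_id _ := ConcreteCategory.hom_ext _ _ <| Quot.ind fun x => by simp [Quot.map, Word.map_id]
  map_comp v w := ConcreteCategory.hom_ext _ _ <| Quot.ind fun x => by simp [Quot.map, Word.map_map]

def coendι (b : B) (g : G.obj b) : wordsFunctor ⟶ coendFunctor G where
  app y := TypeCat.ofHom fun p => Quot.mk _ ⟨b, g, p⟩

def coendUnit : G ⟶ coendFunctor G where
  app y := TypeCat.ofHom fun h => Quot.mk _ ⟨y, h, ⟨y, nil (𝟙 y)⟩⟩
  naturality y y' f := by
    ext h
    change Quot.mk _ _ = Quot.mk (CoendRel G y') ⟨y, h, ⟨y, nil (𝟙 y ≫ f)⟩⟩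
    exact (Quot.sound (CoendRel.mk f h _)).trans (by rw [prepend_self]; simp)

inductive Node : Type
  | words
  | coend

noncomputable def Node.toFunctor : Node → B ⥤ Type v
  | words => wordsFunctor
  | coend => coendFunctor G

/-- Indexing the objects by `ULift Node` puts `Model` in `Type u` for every universe `u`. -/
abbrev Model : Type u := InducedCategory (B ⥤ Type v) fun n : ULift.{u} Node => n.down.toFunctor G

abbrev Model.words : Model.{v, u} G := ⟨Node.words⟩

abbrev Model.coend : Model.{v, u} G := ⟨Node.coend⟩

noncomputable def diagram : Bᵒᵖ ⥤ Model.{v, u} G where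
  obj _ := Model.words G
  map h := InducedCategory.homMk (prependNat h.unop)
  map_id _ := by ext y p; exact prepend_id p
  map_comp h h' := by ext y p; exact (prepend_comp h'.unop h.unop p).symm

noncomputable def coendLeg (b : B) (g : G.obj b) : Model.words.{v, u} G ⟶ Model.coend G :=
  InducedCategory.homMk (coendι G b g)

lemma diagram_map_comp_coendLeg {b b' : B} (f : b ⟶ b') (g : G.obj b) :
    (diagram G).map f.op ≫ coendLeg G b g = coendLeg.{v, u} G b' (G.map f g) := by
  ext y p
  exact (Quot.sound (CoendRel.mk f g p)).symm

noncomputable def coendIsWColim : WColim G (diagram.{v, u} G) (Model.coend G) where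
  e a :=
    { toFun u :=
        { app b := TypeCat.ofHom fun g => coendLeg G b g ≫ u
          naturality b b' f := by
            ext g
            change coendLeg G b' (G.map f g) ≫ u = (diagram G).map f.op ≫ coendLeg G b g ≫ u
            rw [← diagram_map_comp_coendLeg]
            exact Category.assoc _ _ _ }
      invFun α := InducedCategory.homMk
        { app y := TypeCat.ofHom <| Quot.lift (fun x => (α.app x.1 x.2.1).hom.app y x.2.2) <| by
            rintro _ _ ⟨f, g, p⟩
            exact congrArg (fun φ => φ.hom.app y p) (NatTrans.naturality_apply α f g)
          naturality y y' v := ConcreteCategory.hom_ext _ _ <| Quot.ind fun x =>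
            NatTrans.naturality_apply (α.app x.1 x.2.1).hom v x.2.2 }
      left_inv u := by
        ext y x
        induction x using Quot.ind
        rfl
      right_inv α := by
        ext b g
        rfl }
  nat f u := by
    ext b g
    exact (Category.assoc (coendLeg G b g) u f).symm

noncomputable def testObj : Option Node → Type v
  | some n => G ⟶ n.toFunctor G
  | none => ULift Prop

abbrev TestCat : Type u' :=
  InducedCategory (Type v) fun n : ULift.{u'} (Option Node) => testObj G n.down

abbrev TestCat.prop : TestCat.{v, u'} G := ⟨none⟩

noncomputable def homFunctor : Model.{v, u} G ⥤ TestCat.{v, u'} G where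
  obj n := ⟨some n.down⟩
  map φ := InducedCategory.homMk (TypeCat.ofHom fun η => η ≫ φ.hom)

lemma exists_factorization
    (w' : WColim G (diagram.{v, u} G ⋙ homFunctor.{v, u, u'} G)
      ((homFunctor.{v, u, u'} G).obj (Model.coend.{v, u} G)))
    (hw' : w'.e _ (𝟙 _) = unitImage G (diagram G) _ (homFunctor G) ((coendIsWColim G).e _ (𝟙 _))) :
    ∃ (b : B) (g : G.obj b) (β : G ⟶ wordsFunctor), β ≫ coendι G b g = coendUnit G := by
  by_contra! hne
  -- otherwise the indicator of `coendUnit G` and the constant `False` agree on every leg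
  have := w'.hom_ext (a := TestCat.prop G)
    (φ := InducedCategory.homMk (TypeCat.ofHom fun δ => ULift.up (δ = coendUnit G)))
    (ψ := InducedCategory.homMk (TypeCat.ofHom fun _ => ULift.up False)) fun b g => by
      rw [hw']
      ext β
      exact congrArg ULift.up (propext (iff_false_intro (hne b g β)))
  exact (congrArg (fun χ => (χ.hom (coendUnit G)).down) this).mp rfl

noncomputable def coendEval {y : B} : (coendFunctor G).obj y → Option (G.obj y) :=
  Quot.lift (fun x => (homOf x.1 x.2.2).map (G.map · x.2.1)) <| by
    rintro _ _ ⟨f, g, p⟩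
    simp [homOf_prepend, Option.map_map, Function.comp_def]

lemma exists_hom_of_factorization {b₀ : B} {g₀ : G.obj b₀} {β : G ⟶ wordsFunctor}
    (hβ : β ≫ coendι G b₀ g₀ = coendUnit G) (y : B) (h : G.obj y) :
    ∃ x : b₀ ⟶ y, homOf b₀ (β.app y h) = some x ∧ G.map x g₀ = h := by
  have hEval : (homOf b₀ (β.app y h)).map (G.map · g₀) = some h :=
    (congrArg (coendEval G) (types_congr_hom (NatTrans.congr_app hβ y) h)).trans <| by
      change (homOf y ⟨y, NormalWord.nil (𝟙 y)⟩).map (G.map · h) = some h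
      simp [homOf_self_nil]
  exact Option.map_eq_some_iff.mp hEval

lemma nonempty_retract_of_factorization {b₀ : B} {g₀ : G.obj b₀} {β : G ⟶ wordsFunctor}
    (hβ : β ≫ coendι G b₀ g₀ = coendUnit G) : Nonempty (Retract G (coyoneda.obj (op b₀))) := by
  choose x hx hGx using exists_hom_of_factorization G hβ
  refine ⟨{ i := { app y := TypeCat.ofHom (x y), naturality := ?_ }
            r := coyonedaEquiv.symm g₀
            retract := ?_ }⟩
  · intro y y' f
    ext h
    apply Option.some.inj
    change some (x y' (G.map f h)) = some (x y h ≫ f)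
    rw [← hx, NatTrans.naturality_apply]
    exact (homOf_map b₀ f _).trans (by rw [hx]; rfl)
  · ext y h
    exact hGx y h

end AbsoluteWeight

/-- if `G : B ⥤ Type v` is a weight for absolute colimits (every `G`-weighted
colimit is preserved by every functor), then the corresponding profunctor `g : B ⇸ 𝟙` has a
left adjoint, given by `b ↦ Hom(G, B(b, −))`. -/
theorem absolute_weight_gives_leftAdjoint_profunctor (G : B ⥤ Type v)
    (hG : ∀ {A : Type u} [Category.{v} A] {C : Type u'} [Category.{v} C]
      (S : Bᵒᵖ ⥤ A) (c : A) (w : WColim G S c) (T : A ⥤ C),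
        ∃ w' : WColim G (S ⋙ T) (T.obj c),
          w'.e (T.obj c) (𝟙 (T.obj c)) = unitImage G S c T (w.e c (𝟙 c))) :
    Nonempty (ProfAdj (coyoneda ⋙ coyoneda.obj (op G)) G) := by
  open AbsoluteWeight in
  obtain ⟨w', hw'⟩ := hG (diagram G) (Model.coend G) (coendIsWColim G) (homFunctor G)
  obtain ⟨b₀, g₀, β, hβ⟩ := exists_factorization G w' hw'
  obtain ⟨R⟩ := nonempty_retract_of_factorization G hβ
  exact ⟨ProfAdj.ofRetract R⟩
end
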